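/- arXiv:1812.10834 — 2 statements merged into one kernel-verified Lean document; each statement's English description precedes it below -/
import Mathlib

section
/- Let (R, m) be a two-dimensional Noetherian regular local domain with m-adic completion Â, and let ϖ ∈ R be a prime element such that Â/ϖÂ is reduced. Let z ⊂ Â be a height-one prime ideal with z ∩ R = ϖR. Then for every nonzero a ∈ R, the valuation of a in the discrete valuation ring Â_z equals the valuation of a in the discrete valuation ring R_{(ϖ)}; in other words, the normalized discrete valuation of Â_z restricted to R coincides with the ϖ-adic valuation of R. -/
/-!
Write `a = ϖ ^ k * b` with `ϖ ∤ b`. In both localizations `b` becomes a unit and the image of `ϖ`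
is a non-zero-divisor generating the maximal ideal, so in either ring `a` lies in the `n`-th power
of the maximal ideal iff `n ≤ k`. For `Â_z`: `Â` is flat over `R`, so `ϖ` stays a non-zero-divisor;
`z` has height one, so it is minimal over `ϖÂ`; and `ϖÂ` is radical because `Â/ϖÂ` is reduced.
Localizing a radical ideal at a minimal prime over it yields the maximal ideal.
-/

open IsLocalRing

theorem pow_dvd_pow_iff_of_isSMulRegular {S : Type*} [CommRing S] {π : S}
    (hreg : IsSMulRegular S π) (hπ : ¬IsUnit π) {m n : ℕ} : π ^ n ∣ π ^ m ↔ n ≤ m := by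
  refine ⟨fun ⟨c, hc⟩ => ?_, pow_dvd_pow π⟩
  by_contra! hmn
  refine hπ (IsUnit.of_mul_eq_one (π ^ (n - m - 1) * c) (hreg.pow m ?_))
  calc π ^ m • (π * (π ^ (n - m - 1) * c)) = π ^ (m + 1 + (n - m - 1)) * c := by
        rw [smul_eq_mul]; ring
    _ = π ^ m • 1 := by rw [show m + 1 + (n - m - 1) = n by omega, smul_eq_mul, mul_one, hc]

theorem IsLocalRing.pow_mul_mem_maximalIdeal_pow_iff {S : Type*} [CommRing S] [IsLocalRing S]
    {π u : S} (hπ : maximalIdeal S = Ideal.span {π}) (hreg : IsSMulRegular S π) (hu : IsUnit u)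
    {k n : ℕ} : π ^ k * u ∈ maximalIdeal S ^ n ↔ n ≤ k := by
  have hπ_nonunit : ¬IsUnit π := (mem_maximalIdeal π).mp (hπ ▸ Ideal.mem_span_singleton_self π)
  rw [hπ, Ideal.span_singleton_pow, Ideal.mem_span_singleton, hu.dvd_mul_right,
    pow_dvd_pow_iff_of_isSMulRegular hreg hπ_nonunit]

theorem Ideal.mem_minimalPrimes_span_singleton {A : Type*} [CommRing A] {p : Ideal A}
    [hp : p.IsPrime] (hmin : ∀ q : Ideal A, q.IsPrime → q < p → q = ⊥) {x : A} (hx : x ∈ p)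
    (hx0 : x ≠ 0) : p ∈ (Ideal.span {x}).minimalPrimes := by
  refine ⟨⟨hp, (Ideal.span_singleton_le_iff_mem p).mpr hx⟩, fun q ⟨hq, hxq⟩ hqp => ?_⟩
  by_contra hpq
  have hq_bot := hmin q hq (lt_of_le_of_ne hqp fun h => hpq h.ge)
  exact hx0 (by simpa [hq_bot] using (Ideal.span_singleton_le_iff_mem q).mp hxq)

theorem Localization.AtPrime.map_eq_maximalIdeal_of_mem_minimalPrimes {A : Type*} [CommRing A]
    {p I : Ideal A} [p.IsPrime] (hI : I.IsRadical) (hp : p ∈ I.minimalPrimes) :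
    I.map (algebraMap A (Localization.AtPrime p)) = maximalIdeal (Localization.AtPrime p) := by
  rw [← Localization.AtPrime.map_eq_maximalIdeal,
    ← IsLocalization.AtPrime.radical_map_of_mem_minimalPrimes _ p I hp,
    ← IsLocalization.map_radical p.primeCompl, hI.radical]

theorem valuation_completion_restricts_to_adic_valuation_general
    {R : Type*} [CommRing R] [IsDomain R] [IsNoetherianRing R] [IsLocalRing R]
    (ϖ : R) (hϖ : Prime ϖ)
    (hred : IsReduced ((AdicCompletion (maximalIdeal R) R) ⧸
      (Ideal.span {algebraMap R (AdicCompletion (maximalIdeal R) R) ϖ})))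
    (z : Ideal (AdicCompletion (maximalIdeal R) R)) (hz : z.IsPrime)
    (hz1 : z ≠ ⊥ ∧ ∀ q : Ideal (AdicCompletion (maximalIdeal R) R), q.IsPrime → q < z → q = ⊥)
    (hcontr : z.comap (algebraMap R (AdicCompletion (maximalIdeal R) R)) = Ideal.span {ϖ}) :
    haveI := hz
    haveI : (Ideal.span {ϖ}).IsPrime := (Ideal.span_singleton_prime hϖ.ne_zero).mpr hϖ
    ∀ a : R, a ≠ 0 → ∀ n : ℕ,
      ((algebraMap (AdicCompletion (maximalIdeal R) R) (Localization.AtPrime z)).comp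
          (algebraMap R (AdicCompletion (maximalIdeal R) R)) a ∈
        maximalIdeal (Localization.AtPrime z) ^ n ↔
      algebraMap R (Localization.AtPrime (Ideal.span {ϖ})) a ∈
        maximalIdeal (Localization.AtPrime (Ideal.span {ϖ})) ^ n) := by
  have : (Ideal.span {ϖ}).IsPrime := (Ideal.span_singleton_prime hϖ.ne_zero).mpr hϖ
  intro a ha n
  obtain ⟨k, b, hϖb, rfl⟩ := WfDvdMonoid.max_power_factor ha hϖ.irreducible
  set Â := AdicCompletion (maximalIdeal R) R
  have hb : b ∉ Ideal.span {ϖ} := fun h => hϖb (Ideal.mem_span_singleton.mp h)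
  have hϖ_reg_R : IsSMulRegular R ϖ := (IsRegular.of_ne_zero hϖ.ne_zero).left.isSMulRegular
  have hϖ_reg : IsSMulRegular Â (algebraMap R Â ϖ) := hϖ_reg_R.of_flat
  have hϖ_ne_zero : algebraMap R Â ϖ ≠ 0 := by
    intro h
    have : Subsingleton Â := (h ▸ hϖ_reg).subsingleton
    exact hz.ne_top (Subsingleton.elim _ _)
  have hϖ_mem : algebraMap R Â ϖ ∈ z := by
    rw [← Ideal.mem_comap, hcontr]; exact Ideal.mem_span_singleton_self ϖ
  have hmax : maximalIdeal (Localization.AtPrime z) =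
      Ideal.span {algebraMap Â (Localization.AtPrime z) (algebraMap R Â ϖ)} := by
    rw [← Localization.AtPrime.map_eq_maximalIdeal_of_mem_minimalPrimes
      ((Ideal.isRadical_iff_quotient_reduced _).mpr hred)
      (Ideal.mem_minimalPrimes_span_singleton hz1.2 hϖ_mem hϖ_ne_zero),
      Ideal.map_span, Set.image_singleton]
  have hmax' : maximalIdeal (Localization.AtPrime (Ideal.span {ϖ})) =
      Ideal.span {algebraMap R (Localization.AtPrime (Ideal.span {ϖ})) ϖ} := by
    rw [← Localization.AtPrime.map_eq_maximalIdeal, Ideal.map_span, Set.image_singleton]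
  rw [RingHom.comp_apply, map_mul, map_pow, map_mul, map_pow, map_mul, map_pow,
    IsLocalRing.pow_mul_mem_maximalIdeal_pow_iff hmax hϖ_reg.of_flat
      ((IsLocalization.AtPrime.isUnit_to_map_iff _ z _).mpr fun h => hb (hcontr ▸ h)),
    IsLocalRing.pow_mul_mem_maximalIdeal_pow_iff hmax' hϖ_reg_R.of_flat
      ((IsLocalization.AtPrime.isUnit_to_map_iff _ _ _).mpr hb)]

/-- Let `(R, m)` be a two-dimensional Noetherian regular local domain with `m`-adic completion
`Â`, and let `ϖ ∈ R` be a prime element such that `Â/ϖÂ` is reduced.  Let `z ⊂ Â` be a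
height-one prime ideal with `z ∩ R = ϖR`.  Then for every nonzero `a ∈ R` the valuation of `a`
in the discrete valuation ring `Â_z` equals the valuation of `a` in the discrete valuation ring
`R_{(ϖ)}`: membership in the `n`-th power of the maximal ideal is equivalent on both sides for
every `n`, i.e. the normalized discrete valuation of `Â_z` restricted to `R` coincides with the
`ϖ`-adic valuation of `R`. -/
theorem valuation_completion_restricts_to_adic_valuation
    {R : Type*} [CommRing R] [IsDomain R] [IsNoetherianRing R] [IsLocalRing R]
    (hdim : ringKrullDim R = 2)
    (hreg : ∃ x y : R, Ideal.span {x, y} = maximalIdeal R)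
    (ϖ : R) (hϖ : Prime ϖ)
    (hred : IsReduced ((AdicCompletion (maximalIdeal R) R) ⧸
      (Ideal.span {algebraMap R (AdicCompletion (maximalIdeal R) R) ϖ})))
    (z : Ideal (AdicCompletion (maximalIdeal R) R)) (hz : z.IsPrime)
    (hz1 : z ≠ ⊥ ∧ ∀ q : Ideal (AdicCompletion (maximalIdeal R) R), q.IsPrime → q < z → q = ⊥)
    (hcontr : z.comap (algebraMap R (AdicCompletion (maximalIdeal R) R)) = Ideal.span {ϖ}) :
    haveI := hz
    haveI : (Ideal.span {ϖ}).IsPrime := (Ideal.span_singleton_prime hϖ.ne_zero).mpr hϖ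
    ∀ a : R, a ≠ 0 → ∀ n : ℕ,
      ((algebraMap (AdicCompletion (maximalIdeal R) R) (Localization.AtPrime z)).comp
          (algebraMap R (AdicCompletion (maximalIdeal R) R)) a ∈
        maximalIdeal (Localization.AtPrime z) ^ n ↔
      algebraMap R (Localization.AtPrime (Ideal.span {ϖ})) a ∈
        maximalIdeal (Localization.AtPrime (Ideal.span {ϖ})) ^ n) :=
  valuation_completion_restricts_to_adic_valuation_general ϖ hϖ hred z hz hz1 hcontr
end

section
/- Let F be a complete discrete valuation field of characteristic 0 whose residue field is a finite field of characteristic p. Then there is a ring embedding ℚ_p → F, continuous for the valuation topologies, making F a finite-dimensional ℚ_p-vector space; that is, F is isomorphic to a finite extension of the p-adic field ℚ_p. -/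
/-!
As the residue field has characteristic `p`, fixing a rank-one norm on `F` gives `‖p‖ < 1`,
and every integer prime to `p` is a unit of the valuation ring. Hence `‖q‖ = ‖p‖ ^ v_p(q)` for
`q ∈ ℚˣ`, so `ℚ → F` is uniformly continuous for the `p`-adic uniformity and extends by
completeness to a continuous ring map `ℚ_[p] → F`. A complete discretely valued field with
finite residue field is locally compact, and a locally compact Hausdorff topological vector
space over `ℚ_[p]` is finite-dimensional by Riesz's theorem.
-/

open scoped Multiplicative
open scoped WithZero

/-- The residue field of (the valuation ring of) a valued field. -/
noncomputable abbrev ValuedResidueField (F : Type*) [Field F] [Valued F ℤᵐ⁰] : Type _ :=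
  IsLocalRing.ResidueField (Valued.v : Valuation F ℤᵐ⁰).valuationSubring

theorem Valuation.map_natCast_lt_one_of_charP {K Γ : Type*} [Field K]
    [LinearOrderedCommGroupWithZero Γ] (v : Valuation K Γ) (p : ℕ)
    [CharP (IsLocalRing.ResidueField v.valuationSubring) p] : v p < 1 := by
  have hp : (p : v.valuationSubring) ∈ IsLocalRing.maximalIdeal v.valuationSubring := by
    rw [← IsLocalRing.residue_eq_zero_iff, map_natCast, CharP.cast_eq_zero]
  simpa using (Valuation.mem_maximalIdeal_iff K v).1 hp

open Valued.integer in
theorem Valued.locallyCompactSpace_of_finite_residueField {K : Type*} [Field K] [Valued K ℤᵐ⁰]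
    [CompleteSpace K] [(Valued.v : Valuation K ℤᵐ⁰).IsNontrivial]
    [Finite (ValuedResidueField K)] : LocallyCompactSpace K := by
  let := Valuation.IsRankOneDiscrete.rankOne (Valued.v : Valuation K ℤᵐ⁰) one_lt_two
  have : ProperSpace K :=
    properSpace_iff_completeSpace_and_isDiscreteValuationRing_integer_and_finite_residueField.2
      ⟨‹_›, Valuation.valuationSubring_isDiscreteValuationRing _, ‹_›⟩
  infer_instance

theorem FiniteDimensional.of_continuous_ringHom {K L : Type*} [NontriviallyNormedField K]
    [CompleteSpace K] [Field L] [TopologicalSpace L] [IsTopologicalRing L] [T2Space L]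
    [LocallyCompactSpace L] (f : K →+* L) (hf : Continuous f) :
    letI := f.toAlgebra; FiniteDimensional K L :=
  letI := f.toAlgebra
  haveI := continuousSMul_of_algebraMap K L hf
  FiniteDimensional.of_locallyCompactSpace K

section Ultrametric

variable {K : Type*} [NormedField K] [IsUltrametricDist K] {p : ℕ} [hp : Fact p.Prime]

theorem norm_intCast_eq_one_of_not_dvd (hpK : ‖(p : K)‖ < 1) {m : ℤ}
    (hm : ¬ (p : ℤ) ∣ m) : ‖(m : K)‖ = 1 := by
  obtain ⟨a, b, hab⟩ := (Nat.prime_iff_prime_int.1 hp.out).coprime_iff_not_dvd.2 hm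
  refine le_antisymm (IsUltrametricDist.norm_intCast_le_one K m) (not_lt.1 fun hm1 => ?_)
  have hbezout : (a : K) * p + b * m = 1 := by exact_mod_cast congrArg (Int.cast : ℤ → K) hab
  have hmax := IsUltrametricDist.norm_add_le_max ((a : K) * p) ((b : K) * m)
  rw [hbezout, norm_one, norm_mul, norm_mul] at hmax
  refine hmax.not_gt (max_lt ?_ ?_)
  · exact (mul_le_of_le_one_left (norm_nonneg _)
      (IsUltrametricDist.norm_intCast_le_one K a)).trans_lt hpK
  · exact (mul_le_of_le_one_left (norm_nonneg _)
      (IsUltrametricDist.norm_intCast_le_one K b)).trans_lt hm1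

theorem norm_intCast_eq_pow_padicValInt (hpK : ‖(p : K)‖ < 1) {a : ℤ} (ha : a ≠ 0) :
    ‖(a : K)‖ = ‖(p : K)‖ ^ padicValInt p a := by
  obtain ⟨m, hm⟩ := padicValInt_dvd (p := p) a
  have hpm : ¬ (p : ℤ) ∣ m := by
    rintro ⟨k, rfl⟩
    have := (padicValInt_dvd_iff (padicValInt p a + 1) a).1
      ⟨k, by rw [pow_succ]; linear_combination hm⟩
    omega
  conv_lhs => rw [hm]
  rw [Int.cast_mul, norm_mul, Int.cast_pow, norm_pow, Int.cast_natCast,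
    norm_intCast_eq_one_of_not_dvd hpK hpm, mul_one]

variable [CharZero K]

theorem norm_ratCast_eq_zpow_padicValRat (hpK : ‖(p : K)‖ < 1) {q : ℚ} (hq : q ≠ 0) :
    ‖(q : K)‖ = ‖(p : K)‖ ^ padicValRat p q := by
  have hp0 : ‖(p : K)‖ ≠ 0 := norm_ne_zero_iff.2 (Nat.cast_ne_zero.2 hp.out.ne_zero)
  rw [padicValRat_def, zpow_sub₀ hp0, zpow_natCast, zpow_natCast, ← padicValInt.of_nat,
    ← norm_intCast_eq_pow_padicValInt hpK (Rat.num_ne_zero.2 hq),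
    ← norm_intCast_eq_pow_padicValInt hpK (by exact_mod_cast q.den_ne_zero), ← norm_div,
    Int.cast_natCast, ← Rat.cast_def]

theorem norm_ratCast_le_pow_of_norm_padic_le (hpK : ‖(p : K)‖ < 1) {q : ℚ} {n : ℕ}
    (hq : ‖(q : ℚ_[p])‖ ≤ (p : ℝ) ^ (-(n : ℤ))) :
    ‖(q : K)‖ ≤ ‖(p : K)‖ ^ n := by
  rcases eq_or_ne q 0 with rfl | hq0
  · simp
  have hp1 : (1 : ℝ) < p := by exact_mod_cast hp.out.one_lt
  have hpK0 : 0 < ‖(p : K)‖ := norm_pos_iff.2 (Nat.cast_ne_zero.2 hp.out.ne_zero)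
  rw [Padic.norm_eq_zpow_neg_valuation (by exact_mod_cast hq0), Padic.valuation_ratCast,
    zpow_le_zpow_iff_right₀ hp1, neg_le_neg_iff] at hq
  rw [norm_ratCast_eq_zpow_padicValRat hpK hq0, ← zpow_natCast]
  exact zpow_le_zpow_right_of_le_one₀ hpK0 hpK.le hq

theorem uniformContinuous_ratCast_withVal_padicValuation (hpK : ‖(p : K)‖ < 1) :
    UniformContinuous
      ((Rat.castHom K).comp (WithVal.equiv (Rat.padicValuation p)).toRingHom) := by
  rw [(Padic.isUniformInducing_cast_withVal.basis_uniformity Metric.uniformity_basis_dist_le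
    ).uniformContinuous_iff Metric.uniformity_basis_dist]
  intro ε hε
  obtain ⟨n, hn⟩ := exists_pow_lt_of_lt_one hε hpK
  refine ⟨(p : ℝ) ^ (-(n : ℤ)), zpow_pos (by exact_mod_cast hp.out.pos) _,
    fun x y hxy => ?_⟩
  simp only [Set.mem_preimage, Prod.map, Set.mem_ofPred_eq, dist_eq_norm, RingHom.coe_comp,
    Function.comp_apply, Rat.coe_castHom, ← Rat.cast_sub, ← map_sub] at hxy ⊢
  exact (norm_ratCast_le_pow_of_norm_padic_le hpK hxy).trans_lt hn

theorem exists_continuous_ringHom_padic [CompleteSpace K] (hpK : ‖(p : K)‖ < 1) :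
    ∃ f : ℚ_[p] →+* K, Continuous f :=
  ⟨IsDenseInducing.extendRingHom Padic.isUniformInducing_cast_withVal
      Padic.isDenseInducing_cast_withVal.dense
      (uniformContinuous_ratCast_withVal_padicValuation hpK),
    (uniformContinuous_uniformly_extend Padic.isUniformInducing_cast_withVal
      Padic.isDenseInducing_cast_withVal.dense
      (uniformContinuous_ratCast_withVal_padicValuation hpK)).continuous⟩

end Ultrametric

theorem complete_discrete_valuation_field_mixed_char_classification_general
    (p : ℕ) [Fact p.Prime]
    (F : Type*) [Field F] [Valued F ℤᵐ⁰] [CompleteSpace F] [CharZero F]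
    [Finite (ValuedResidueField F)]
    (hchar : CharP (ValuedResidueField F) p) :
    ∃ f : ℚ_[p] →+* F, Continuous f ∧
      (letI : Algebra ℚ_[p] F := f.toAlgebra; FiniteDimensional ℚ_[p] F) := by
  have hp1 : Valued.v (p : F) < 1 := Valued.v.map_natCast_lt_one_of_charP p
  have : (Valued.v : Valuation F ℤᵐ⁰).IsNontrivial :=
    ⟨⟨p, by simp [(Fact.out : p.Prime).ne_zero], hp1.ne⟩⟩
  have := Valued.locallyCompactSpace_of_finite_residueField (K := F)
  let := Valuation.IsRankOneDiscrete.rankOne (Valued.v : Valuation F ℤᵐ⁰) one_lt_two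
  let := Valued.toNormedField F ℤᵐ⁰
  obtain ⟨f, hf⟩ := exists_continuous_ringHom_padic (Valued.toNormedField.norm_lt_one_iff.2 hp1)
  exact ⟨f, hf, FiniteDimensional.of_continuous_ringHom f hf⟩

/-- Classification of mixed-characteristic local fields: if `F` is a complete discrete
valuation field of characteristic `0` whose residue field is a finite field of characteristic
`p`, then there is a ring embedding `ℚ_p → F`, continuous for the valuation topologies, making
`F` a finite-dimensional `ℚ_p`-vector space; that is, `F` is (isomorphic to) a finite extension
of the `p`-adic field `ℚ_p`. -/
theorem complete_discrete_valuation_field_mixed_char_classification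
    (p : ℕ) [Fact p.Prime]
    (F : Type*) [Field F] [Valued F ℤᵐ⁰] [CompleteSpace F] [CharZero F]
    (hsurj : Function.Surjective (Valued.v : F → ℤᵐ⁰))
    [Finite (ValuedResidueField F)]
    (hchar : CharP (ValuedResidueField F) p) :
    ∃ f : ℚ_[p] →+* F, Continuous f ∧
      (letI : Algebra ℚ_[p] F := f.toAlgebra; FiniteDimensional ℚ_[p] F) :=
  complete_discrete_valuation_field_mixed_char_classification_general p F hchar
end
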